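/- arXiv:2004.03062 — 2 statements merged into one kernel-verified Lean document; each statement's English description precedes it below -/
import Mathlib

section
/- If x and y are unit vectors lying in distinct orthogonal summands of a Hilbert space direct sum, and z, w are any unit vectors each lying in some summand, then max(‖x−z‖−1,0) + max(‖z−w‖−1,0) + max(‖w−y‖−1,0) ≥ √2 − 1. -/
theorem norm_sub_eq_sqrt_two_of_inner_eq_zero {E : Type*} [NormedAddCommGroup E]
    [InnerProductSpace ℝ E] {u v : E} (hu : ‖u‖ = 1) (hv : ‖v‖ = 1)
    (huv : (inner ℝ u v : ℝ) = 0) : ‖u - v‖ = Real.sqrt 2 := by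
  rw [← Real.sqrt_mul_self (norm_nonneg _), norm_sub_sq_eq_norm_sq_add_norm_sq_real huv, hu, hv]
  norm_num

theorem sqrt_two_sub_one_le_max_norm_sub_sub_one {E : Type*} [NormedAddCommGroup E]
    [InnerProductSpace ℝ E] {ι : Type*} (V : ι → Submodule ℝ E)
    (horth : ∀ m n : ι, m ≠ n → ∀ x ∈ V m, ∀ y ∈ V n, (inner ℝ x y : ℝ) = 0)
    {i j : ι} (hij : i ≠ j) {u v : E} (hui : u ∈ V i) (hu : ‖u‖ = 1)
    (hvj : v ∈ V j) (hv : ‖v‖ = 1) :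
    Real.sqrt 2 - 1 ≤ max (‖u - v‖ - 1) 0 := by
  rw [norm_sub_eq_sqrt_two_of_inner_eq_zero hu hv (horth i j hij u hui v hvj)]
  exact le_max_left _ _

theorem chain_across_spheres_general {H : Type*} [NormedAddCommGroup H]
    [InnerProductSpace ℝ H] {ι : Type*} (V : ι → Submodule ℝ H)
    (horth : ∀ m n : ι, m ≠ n → ∀ x ∈ V m, ∀ y ∈ V n, (inner ℝ x y : ℝ) = 0)
    {m n : ι} (hmn : m ≠ n) {x y z w : H}
    (hxm : x ∈ V m) (hx : ‖x‖ = 1) (hyn : y ∈ V n) (hy : ‖y‖ = 1)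
    (hz : ∃ k, z ∈ V k ∧ ‖z‖ = 1) (hw : ∃ k, w ∈ V k ∧ ‖w‖ = 1) :
    Real.sqrt 2 - 1 ≤
      max (‖x - z‖ - 1) 0 + max (‖z - w‖ - 1) 0 + max (‖w - y‖ - 1) 0 := by
  obtain ⟨k, hzk, hz⟩ := hz
  obtain ⟨l, hwl, hw⟩ := hw
  have hxz := le_max_right (‖x - z‖ - 1) 0
  have hzw := le_max_right (‖z - w‖ - 1) 0
  have hwy := le_max_right (‖w - y‖ - 1) 0
  -- Since `m ≠ n`, some consecutive pair in the chain `m, k, l, n` of summands differs.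
  rcases eq_or_ne m k with rfl | hmk
  · rcases eq_or_ne l n with rfl | hln
    · linarith [sqrt_two_sub_one_le_max_norm_sub_sub_one V horth hmn hzk hz hwl hw]
    · linarith [sqrt_two_sub_one_le_max_norm_sub_sub_one V horth hln hwl hw hyn hy]
  · linarith [sqrt_two_sub_one_le_max_norm_sub_sub_one V horth hmk hxm hx hzk hz]

theorem chain_across_spheres {H : Type*} [NormedAddCommGroup H]
    [InnerProductSpace ℝ H] [CompleteSpace H] {ι : Type*} (V : ι → Submodule ℝ H)
    (horth : ∀ m n : ι, m ≠ n → ∀ x ∈ V m, ∀ y ∈ V n, (inner ℝ x y : ℝ) = 0)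
    {m n : ι} (hmn : m ≠ n) {x y z w : H}
    (hxm : x ∈ V m) (hx : ‖x‖ = 1) (hyn : y ∈ V n) (hy : ‖y‖ = 1)
    (hz : ∃ k, z ∈ V k ∧ ‖z‖ = 1) (hw : ∃ k, w ∈ V k ∧ ‖w‖ = 1) :
    Real.sqrt 2 - 1 ≤
      max (‖x - z‖ - 1) 0 + max (‖z - w‖ - 1) 0 + max (‖w - y‖ - 1) 0 :=
  chain_across_spheres_general V horth hmn hxm hx hyn hy hz hw
end

section
/- In the real Banach space c₀ (sequences converging to 0 with the sup norm), no infinite-dimensional closed subspace is isomorphic (linearly homeomorphic) to a Hilbert space. -/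
/-!
An infinite-dimensional Hilbert space contains an orthonormal sequence `uᵢ`, which converges
weakly to zero by Bessel's inequality. If `S` embeds the Hilbert space into `c₀`, the vectors
`S uᵢ` are bounded and every coordinate of them tends to zero, so a gliding hump argument extracts
a subsequence whose images have essentially disjoint supports: all partial sums of
`S u_{φ j}` stay bounded. But `‖∑_{j<N} u_{φ j}‖ = √N`, so `S` cannot be bounded below.
-/

open Filter Finset Topology
open scoped NNReal ZeroAtInfty

namespace ZeroAtInftyContinuousMap

variable {α β : Type*} [TopologicalSpace α] [NormedAddCommGroup β]

lemma norm_apply_le (f : C₀(α, β)) (x : α) : ‖f x‖ ≤ ‖f‖ :=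
  f.toBCF.norm_coe_le_norm x

lemma norm_le_of_forall_apply_le {f : C₀(α, β)} {M : ℝ} (hM : 0 ≤ M)
    (h : ∀ x, ‖f x‖ ≤ M) : ‖f‖ ≤ M :=
  (BoundedContinuousFunction.norm_le hM).2 h

lemma sum_apply {ι : Type*} (s : Finset ι) (f : ι → C₀(α, β)) (x : α) :
    (∑ i ∈ s, f i) x = ∑ i ∈ s, f i x :=
  map_sum (⟨⟨fun g ↦ g x, rfl⟩, fun _ _ ↦ rfl⟩ : C₀(α, β) →+ β) f s

noncomputable def evalCLM (𝕜 : Type*) [NormedField 𝕜] [NormedSpace 𝕜 β] (x : α) :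
    C₀(α, β) →L[𝕜] β :=
  LinearMap.mkContinuous ⟨⟨fun f ↦ f x, fun _ _ ↦ rfl⟩, fun _ _ ↦ rfl⟩ 1
    fun f ↦ (one_mul ‖f‖).symm ▸ norm_apply_le f x

end ZeroAtInftyContinuousMap

section Orthonormal

variable {𝕜 E : Type*} [RCLike 𝕜] [NormedAddCommGroup E] [InnerProductSpace 𝕜 E]

theorem exists_orthonormal_nat_of_not_finiteDimensional (h : ¬ FiniteDimensional 𝕜 E) :
    ∃ u : ℕ → E, Orthonormal 𝕜 u := by
  let b := Module.Basis.ofVectorSpace 𝕜 E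
  have : Infinite (Module.Basis.ofVectorSpaceIndex 𝕜 E) :=
    not_finite_iff_infinite.1 fun _ ↦ h (Module.Finite.of_basis b)
  let e := Infinite.natEmbedding (Module.Basis.ofVectorSpaceIndex 𝕜 E)
  exact ⟨_, InnerProductSpace.gramSchmidtNormed_orthonormal
    (b.linearIndependent.comp e e.injective)⟩

theorem Orthonormal.norm_sum_sq {ι : Type*} {u : ι → E} (hu : Orthonormal 𝕜 u)
    (s : Finset ι) : ‖∑ i ∈ s, u i‖ ^ 2 = #s := by
  have := hu.inner_sum 1 1 s
  simp only [Pi.one_apply, one_smul, map_one, sum_const, nsmul_eq_mul, mul_one,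
    inner_self_eq_norm_sq_to_K] at this
  exact_mod_cast this

theorem Orthonormal.exists_lt_norm_sum {u : ℕ → E} (hu : Orthonormal 𝕜 u) (M : ℝ) :
    ∃ N, M < ‖∑ i ∈ range N, u i‖ := by
  obtain ⟨N, hN⟩ := exists_nat_gt (M ^ 2)
  refine ⟨N, lt_of_pow_lt_pow_left₀ 2 (norm_nonneg _) ?_⟩
  rwa [hu.norm_sum_sq, card_range]

theorem Orthonormal.tendsto_apply_zero [CompleteSpace E] {u : ℕ → E} (hu : Orthonormal 𝕜 u)
    (f : StrongDual 𝕜 E) : Tendsto (fun i ↦ f (u i)) atTop (𝓝 0) := by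
  set y := (InnerProductSpace.toDual 𝕜 E).symm f
  have hsq : Tendsto (fun i ↦ ‖inner 𝕜 (u i) y‖ ^ 2) atTop (𝓝 0) :=
    (hu.inner_products_summable y).tendsto_atTop_zero
  rw [tendsto_zero_iff_norm_tendsto_zero]
  simpa [← InnerProductSpace.toDual_symm_apply, y, norm_inner_symm] using hsq.sqrt

end Orthonormal

section GlidingHump

variable {E : Type*} [NormedAddCommGroup E]

theorem norm_sum_range_le_of_forall_ne {b : ℕ → E} {C : ℝ} (j₀ : ℕ) (hC : ∀ j, ‖b j‖ ≤ C)
    (hb : ∀ j ≠ j₀, ‖b j‖ ≤ (1 / 2) ^ j) (N : ℕ) : ‖∑ j ∈ range N, b j‖ ≤ C + 2 := by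
  have hC₀ : 0 ≤ C := (norm_nonneg _).trans (hC 0)
  have hterm : ∀ j, ‖b j‖ ≤ (1 / 2) ^ j + if j = j₀ then C else 0 := by
    intro j
    by_cases hj : j = j₀
    · simp only [hj, if_true]
      linarith [hC j₀, pow_nonneg (by norm_num : (0 : ℝ) ≤ 1 / 2) j₀]
    · simpa only [hj, if_false, add_zero] using hb j hj
  calc ‖∑ j ∈ range N, b j‖ ≤ ∑ j ∈ range N, ((1 / 2) ^ j + if j = j₀ then C else 0) :=
        (norm_sum_le _ _).trans (sum_le_sum fun j _ ↦ hterm j)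
    _ ≤ 2 + C := by
        rw [sum_add_distrib, sum_ite_eq']
        gcongr
        · exact sum_geometric_two_le N
        · split_ifs <;> simp [hC₀]
    _ = C + 2 := add_comm _ _

theorem Monotone.exists_forall_ne_of_le_of_lt {L : ℕ → ℕ} (hL : Monotone L) {k : ℕ}
    {P : ℕ → Prop} (hle : ∀ j, L j ≤ k → P j) (hlt : ∀ j, k < L j → P (j + 1)) :
    ∃ j₀, ∀ j ≠ j₀, P j := by
  classical
  by_cases hk : ∃ j, k < L j
  · refine ⟨Nat.find hk, fun j hj ↦ ?_⟩
    rcases hj.lt_or_gt with hj | hj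
    · exact hle j (not_lt.1 (Nat.find_min hk hj))
    · obtain ⟨i, rfl⟩ := Nat.exists_eq_add_of_lt hj
      exact hlt _ ((Nat.find_spec hk).trans_le (hL (by omega)))
  · simp only [not_exists, not_lt] at hk
    exact ⟨0, fun j _ ↦ hle j (hk j)⟩

theorem exists_strictMono_norm_sum_apply_le {a : ℕ → ℕ → E} {C : ℝ} (hC : ∀ i k, ‖a i k‖ ≤ C)
    (hrow : ∀ i, Tendsto (a i) atTop (𝓝 0)) (hcol : ∀ k, Tendsto (a · k) atTop (𝓝 0)) :
    ∃ φ : ℕ → ℕ, StrictMono φ ∧ ∀ N k, ‖∑ j ∈ range N, a (φ j) k‖ ≤ C + 2 := by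
  have hε : ∀ i : ℕ, (0 : ℝ) < (1 / 2) ^ i := fun i ↦ by positivity
  have hε_anti : ∀ {i j : ℕ}, i ≤ j → ((1 : ℝ) / 2) ^ j ≤ (1 / 2) ^ i := fun h ↦
    pow_le_pow_of_le_one (by norm_num) (by norm_num) h
  choose K₀ hK₀ using fun i ↦
    eventually_atTop.1 (NormedAddGroup.tendsto_nhds_zero.1 (hrow i) _ (hε i))
  set K := partialSups K₀
  have hK : ∀ i k, K i ≤ k → ‖a i k‖ ≤ (1 / 2) ^ i := fun i k hk ↦
    (hK₀ i k ((le_partialSups K₀ i).trans hk)).le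
  choose next hnext_gt hnext using fun i ↦
    ((eventually_gt_atTop i).and <| (eventually_all_finset (range (K i))).2
      fun k _ ↦ NormedAddGroup.tendsto_nhds_zero.1 (hcol k) _ (hε (i + 1))).exists
  set φ : ℕ → ℕ := fun j ↦ next^[j] 0
  have hφ_succ : ∀ j, φ (j + 1) = next (φ j) := fun j ↦ Function.iterate_succ_apply' _ _ _
  have hφ : StrictMono φ := strictMono_nat_of_lt_succ fun j ↦ hφ_succ j ▸ hnext_gt _
  refine ⟨φ, hφ, fun N k ↦ ?_⟩
  -- Row `φ j` is small from column `K (φ j)` on and row `φ (j + 1)` is small before it,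
  -- so in column `k` at most one chosen row is large.
  obtain ⟨j₀, hj₀⟩ := (K.monotone.comp hφ.monotone).exists_forall_ne_of_le_of_lt (k := k)
    (P := fun j ↦ ‖a (φ j) k‖ ≤ (1 / 2) ^ j)
    (fun j hj ↦ (hK _ _ hj).trans (hε_anti (hφ.id_le j)))
    (fun j hj ↦ hφ_succ j ▸ (hnext _ k (mem_range.2 hj)).le.trans
      (hε_anti (Nat.succ_le_succ (hφ.id_le j))))
  exact norm_sum_range_le_of_forall_ne j₀ (fun j ↦ hC _ _) hj₀ N

theorem ZeroAtInftyContinuousMap.exists_strictMono_norm_sum_le {v : ℕ → C₀(ℕ, E)} {C : ℝ}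
    (hC : ∀ i, ‖v i‖ ≤ C) (hv : ∀ k, Tendsto (v · k) atTop (𝓝 0)) :
    ∃ φ : ℕ → ℕ, StrictMono φ ∧ ∀ N, ‖∑ j ∈ range N, v (φ j)‖ ≤ C + 2 := by
  obtain ⟨φ, hφ, hsum⟩ := exists_strictMono_norm_sum_apply_le (a := fun i k ↦ v i k)
    (fun i k ↦ (norm_apply_le (v i) k).trans (hC i))
    (fun i ↦ cocompact_eq_atTop (α := ℕ) ▸ zero_at_infty (v i)) hv
  refine ⟨φ, hφ, fun N ↦ norm_le_of_forall_apply_le ?_ fun k ↦ ?_⟩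
  · linarith [(norm_nonneg _).trans (hC 0)]
  · simpa only [sum_apply] using hsum N k

end GlidingHump

theorem ZeroAtInftyContinuousMap.not_antilipschitzWith_of_not_finiteDimensional
    {𝕜 H : Type*} [RCLike 𝕜] [NormedAddCommGroup H] [InnerProductSpace 𝕜 H] [CompleteSpace H]
    (hH : ¬ FiniteDimensional 𝕜 H) (S : H →L[𝕜] C₀(ℕ, 𝕜)) (K : ℝ≥0) :
    ¬ AntilipschitzWith K S := by
  intro hS
  obtain ⟨u, hu⟩ := exists_orthonormal_nat_of_not_finiteDimensional hH
  have hSu : ∀ i, ‖S (u i)‖ ≤ ‖S‖ := fun i ↦ by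
    simpa [hu.norm_eq_one] using S.le_opNorm (u i)
  have hSu_coord : ∀ k, Tendsto (fun i ↦ S (u i) k) atTop (𝓝 0) := fun k ↦
    hu.tendsto_apply_zero ((evalCLM 𝕜 k).comp S)
  obtain ⟨φ, hφ, hsum⟩ := exists_strictMono_norm_sum_le hSu hSu_coord
  obtain ⟨N, hN⟩ := (hu.comp φ hφ.injective).exists_lt_norm_sum (K * (‖S‖ + 2))
  refine hN.not_ge ?_
  calc ‖∑ j ∈ range N, u (φ j)‖ ≤ K * ‖S (∑ j ∈ range N, u (φ j))‖ :=
        hS.le_mul_norm (map_zero S) _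
    _ ≤ K * (‖S‖ + 2) := by
        rw [map_sum]
        gcongr
        exact hsum N

theorem c0_no_hilbert_subspace_general
    (V : Submodule ℝ (ZeroAtInftyContinuousMap ℕ ℝ))
    (hinf : ¬ FiniteDimensional ℝ V)
    (H : Type) [NormedAddCommGroup H] [InnerProductSpace ℝ H] [CompleteSpace H] :
    IsEmpty (V ≃L[ℝ] H) := by
  refine ⟨fun T ↦ ?_⟩
  -- Fixing the fields and spaces lets Lean find the normed instances on `V` before unifying
  -- them with the submodule instances in the type of `T.symm`.
  have hT := ContinuousLinearEquiv.antilipschitz (𝕜 := ℝ) (𝕜₂ := ℝ) (E := H) (F := V) T.symm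
  exact ZeroAtInftyContinuousMap.not_antilipschitzWith_of_not_finiteDimensional
    (fun _ ↦ hinf T.symm.toLinearEquiv.finiteDimensional) (V.subtypeL.comp (T.symm : H →L[ℝ] V))
    _ ((AntilipschitzWith.subtype_coe _).comp hT)

theorem c0_no_hilbert_subspace
    (V : Submodule ℝ (ZeroAtInftyContinuousMap ℕ ℝ))
    (hclosed : IsClosed (V : Set (ZeroAtInftyContinuousMap ℕ ℝ)))
    (hinf : ¬ FiniteDimensional ℝ V)
    (H : Type) [NormedAddCommGroup H] [InnerProductSpace ℝ H] [CompleteSpace H] :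
    IsEmpty (V ≃L[ℝ] H) :=
  c0_no_hilbert_subspace_general V hinf H
end
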